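/- arXiv:1108.1999 — 7 statements merged into one kernel-verified Lean document; each statement's English description precedes it below -/
import Mathlib

section
/- The point (X*, Y*, Z*) with X* = (1 + R₀ D₀)/(R₀ (1 + D₀)), Y* = (μ_h/(μ_h+γ))(1 − X*), Z* = D₀ (1 − X*)/X* is an equilibrium of the system X' = μ_h(1−X) − δXZ, Y' = δXZ − (μ_h+γ)Y, Z' = σ(1−Z)Y − μ_v Z, i.e., all three right-hand sides vanish at this point. -/
/-!
Write `R = R₀` and `D = D₀`. Since `δ D = μ_h` and `X* Z* = D (1 - X*)`, the infection term
`δ X* Z*` equals `μ_h (1 - X*) = (μ_h + γ) Y*`, which kills the first two right-hand sides.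
For the third, `1 - X* = (R - 1)/(R (1 + D))`, `Z* = D (R - 1)/(1 + R D)` and
`1 - Z* = (1 + D)/(1 + R D)`; after cancelling `(R - 1)/(1 + R D)` it reduces to
`R D μ_v (μ_h + γ) = σ μ_h`, which is the definition of `R₀` multiplied by `D₀ = μ_h/δ`.
-/

namespace EndemicEquilibrium

variable {R D X : ℝ}

lemma endemicX_pos (hR : 0 < R) (hD : 0 < D) (hX : X = (1 + R * D) / (R * (1 + D))) :
    0 < X := by
  rw [hX]
  positivity

lemma one_sub_endemicX (hR : R ≠ 0) (hD : 1 + D ≠ 0) (hX : X = (1 + R * D) / (R * (1 + D))) :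
    1 - X = (R - 1) / (R * (1 + D)) := by
  rw [hX]
  field_simp
  ring

lemma endemicZ_eq (hR : 0 < R) (hD : 0 < D) (hX : X = (1 + R * D) / (R * (1 + D))) :
    D * (1 - X) / X = D * (R - 1) / (1 + R * D) := by
  rw [one_sub_endemicX hR.ne' (by positivity) hX, hX]
  field_simp

lemma one_sub_endemicZ (h : 1 + R * D ≠ 0) :
    1 - D * (R - 1) / (1 + R * D) = (1 + D) / (1 + R * D) := by
  rw [eq_div_iff h, sub_mul, div_mul_cancel₀ _ h]
  ring

lemma mul_mul_endemicZ {δ μ : ℝ} (hX : X ≠ 0) (hD : δ * D = μ) :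
    δ * X * (D * (1 - X) / X) = μ * (1 - X) := by
  rw [← hD]
  field_simp

end EndemicEquilibrium

open EndemicEquilibrium in
theorem endemic_equilibrium_is_equilibrium_general
    (μh μv γ δ σ : ℝ) (hμh : 0 < μh) (hμv : 0 < μv) (hγ : 0 < γ)
    (hδ : 0 < δ)
    (R₀ D₀ Xs Ys Zs : ℝ)
    (hR₀ : R₀ = σ * δ / (μv * (μh + γ)))
    (hD₀ : D₀ = μh / δ)
    (hR₀gt : 1 < R₀)
    (hXs : Xs = (1 + R₀ * D₀) / (R₀ * (1 + D₀)))
    (hYs : Ys = μh / (μh + γ) * (1 - Xs))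
    (hZs : Zs = D₀ * (1 - Xs) / Xs) :
    μh * (1 - Xs) - δ * Xs * Zs = 0 ∧
    δ * Xs * Zs - (μh + γ) * Ys = 0 ∧
    σ * (1 - Zs) * Ys - μv * Zs = 0 := by
  have hR₀pos : 0 < R₀ := one_pos.trans hR₀gt
  have hD₀pos : 0 < D₀ := hD₀ ▸ div_pos hμh hδ
  have hδD₀ : δ * D₀ = μh := by rw [hD₀]; field_simp
  have hinfection : δ * Xs * Zs = μh * (1 - Xs) :=
    hZs ▸ mul_mul_endemicZ (endemicX_pos hR₀pos hD₀pos hXs).ne' hδD₀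
  have hrecovery : (μh + γ) * Ys = μh * (1 - Xs) := by rw [hYs]; field_simp
  have hR₀D₀ : R₀ * D₀ * (μv * (μh + γ)) = σ * μh := by rw [hR₀, ← hδD₀]; field_simp
  refine ⟨by rw [hinfection]; ring, by rw [hinfection, hrecovery]; ring, ?_⟩
  rw [hYs, hZs, endemicZ_eq hR₀pos hD₀pos hXs, one_sub_endemicZ (by positivity),
    one_sub_endemicX hR₀pos.ne' (by positivity) hXs]
  field_simp
  linear_combination (1 - R₀) * hR₀D₀

theorem endemic_equilibrium_is_equilibrium
    (μh μv γ δ σ : ℝ) (hμh : 0 < μh) (hμv : 0 < μv) (hγ : 0 < γ)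
    (hδ : 0 < δ) (hσ : 0 < σ)
    (R₀ D₀ Xs Ys Zs : ℝ)
    (hR₀ : R₀ = σ * δ / (μv * (μh + γ)))
    (hD₀ : D₀ = μh / δ)
    (hR₀gt : 1 < R₀)
    (hXs : Xs = (1 + R₀ * D₀) / (R₀ * (1 + D₀)))
    (hYs : Ys = μh / (μh + γ) * (1 - Xs))
    (hZs : Zs = D₀ * (1 - Xs) / Xs) :
    μh * (1 - Xs) - δ * Xs * Zs = 0 ∧
    δ * Xs * Zs - (μh + γ) * Ys = 0 ∧
    σ * (1 - Zs) * Ys - μv * Zs = 0 :=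
  endemic_equilibrium_is_equilibrium_general μh μv γ δ σ hμh hμv hγ hδ R₀ D₀ Xs Ys Zs hR₀ hD₀ hR₀gt
    hXs hYs hZs
end

section
/- Along trajectories of the system X' = μ_h(1−X) − δXZ, Y' = δXZ − (μ_h+γ)Y, Z' = σ(1−Z)Y − μ_v Z, the function V(X,Y,Z) = X − log X + Y + (δ/μ_v) Z satisfies V̇ = −μ_h(1−X)²/X − (μ_h+γ)(1−R₀)Y − (σδ/μ_v) Z Y, which is ≤ 0 whenever 0 < X and Y,Z ≥ 0 and R₀ ≤ 1. -/
theorem lyapunov_derivative_disease_free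
    (μh μv γ δ σ : ℝ) (hμh : 0 < μh) (hμv : 0 < μv) (hγ : 0 < γ)
    (hδ : 0 < δ) (hσ : 0 < σ)
    (R₀ : ℝ) (hR₀ : R₀ = σ * δ / (μv * (μh + γ)))
    (X Y Z : ℝ) (hX : 0 < X) :
    (1 - 1 / X) * (μh * (1 - X) - δ * X * Z)
      + (δ * X * Z - (μh + γ) * Y)
      + (δ / μv) * (σ * (1 - Z) * Y - μv * Z)
    = -(μh * (1 - X) ^ 2 / X) - (μh + γ) * (1 - R₀) * Y - (σ * δ / μv) * Z * Y
    ∧ (0 ≤ Y → 0 ≤ Z → R₀ ≤ 1 →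
        (1 - 1 / X) * (μh * (1 - X) - δ * X * Z)
          + (δ * X * Z - (μh + γ) * Y)
          + (δ / μv) * (σ * (1 - Z) * Y - μv * Z) ≤ 0) := by
  have hγμ : μh + γ ≠ 0 := by positivity
  have heq : (1 - 1 / X) * (μh * (1 - X) - δ * X * Z)
      + (δ * X * Z - (μh + γ) * Y)
      + (δ / μv) * (σ * (1 - Z) * Y - μv * Z)
    = -(μh * (1 - X) ^ 2 / X) - (μh + γ) * (1 - R₀) * Y - (σ * δ / μv) * Z * Y := by
    subst hR₀
    field_simp
    ring
  refine ⟨heq, fun hY hZ hR => ?_⟩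
  rw [heq]
  have t1 : 0 ≤ μh * (1 - X) ^ 2 / X := by positivity
  have t2 : 0 ≤ (μh + γ) * (1 - R₀) * Y := by
    have : 0 ≤ 1 - R₀ := by linarith
    positivity
  have t3 : 0 ≤ (σ * δ / μv) * Z * Y := by positivity
  linarith
end

section
/- If R₀ ≤ 1, then for all X > 0, Y ≥ 0, Z ≥ 0, the expression (1 − 1/X)(μ_h(1−X) − δXZ) + (δXZ − (μ_h+γ)Y) + (δ/μ_v)(σ(1−Z)Y − μ_v Z) is nonpositive. -/
theorem lyapunov_derivative_nonpositive
    (μh μv γ δ σ : ℝ) (hμh : 0 < μh) (hμv : 0 < μv) (hγ : 0 < γ)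
    (hδ : 0 < δ) (hσ : 0 < σ)
    (R₀ : ℝ) (hR₀ : R₀ = σ * δ / (μv * (μh + γ)))
    (hR₀le : R₀ ≤ 1) :
    ∀ X Y Z : ℝ, 0 < X → 0 ≤ Y → 0 ≤ Z →
      (1 - 1 / X) * (μh * (1 - X) - δ * X * Z)
        + (δ * X * Z - (μh + γ) * Y)
        + (δ / μv) * (σ * (1 - Z) * Y - μv * Z) ≤ 0 := by
  have hkey : σ * δ ≤ μv * (μh + γ) := by
    rw [hR₀, div_le_one (by positivity)] at hR₀le
    exact hR₀le
  intro X Y Z hX hY hZ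
  have hXne : X ≠ 0 := ne_of_gt hX
  have hμvne : μv ≠ 0 := ne_of_gt hμv
  have heq : (1 - 1 / X) * (μh * (1 - X) - δ * X * Z)
        + (δ * X * Z - (μh + γ) * Y)
        + (δ / μv) * (σ * (1 - Z) * Y - μv * Z)
      = -(μh * (X - 1) ^ 2 / X) + (σ * δ / μv - (μh + γ)) * Y
        - (σ * δ / μv) * Z * Y := by
    field_simp
    ring
  rw [heq]
  have h1 : 0 ≤ μh * (X - 1) ^ 2 / X := by positivity
  have h2 : σ * δ / μv - (μh + γ) ≤ 0 := by
    rw [sub_nonpos, div_le_iff₀ hμv]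
    nlinarith
  have h3 : 0 ≤ σ * δ / μv * Z * Y := by positivity
  nlinarith [mul_nonpos_of_nonpos_of_nonneg h2 hY]
end

section
/- If R₀ ≤ 1, the disease-free equilibrium (1,0,0) of the system X' = μ_h(1−X) − δXZ, Y' = δXZ − (μ_h+γ)Y, Z' = σ(1−Z)Y − μ_v Z is globally asymptotically stable on the positive octant: every solution with X(0)>0, Y(0)≥0, Z(0)≥0 converges to (1,0,0) as t → ∞. -/
/-!
Since `Z ≤ 1`, `X' ≥ μ_h - (μ_h + δ) X`, so `X` stays above `x₀ = min (X 0) (μ_h / (μ_h + δ)) > 0`.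
When `R₀ ≤ 1` and `X + Y ≤ 1`, the weighted infected mass `σ Y + (μ_h + γ) Z` decreases at rate at
least `σ (δ + μ_h + γ) Y Z`. Subtracting a small multiple `ε Y Z` produces the missing `-Y²` and
`-Z²` terms in the derivative (the latter thanks to `X ≥ x₀`), so that
`W = σ Y + (μ_h + γ) Z - ε Y Z` satisfies `W' ≤ -κ W²`. Hence `W t ^ 2 ≤ W 0 / (κ t)`, so `Y` and
`Z` tend to `0`, and Grönwall's inequality for `(1 - X)' ≤ -μ_h (1 - X) + δ Z` gives `X → 1`.
-/

open Real Filter Topology Set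

lemma le_gronwallBound_of_hasDerivAt {f f' : ℝ → ℝ} {δ K ε a t : ℝ}
    (hf : ∀ s, HasDerivAt f (f' s) s) (ha : f a ≤ δ)
    (bound : ∀ s ≥ a, f' s ≤ K * f s + ε) (ht : a ≤ t) :
    f t ≤ gronwallBound δ K ε (t - a) :=
  le_gronwallBound_of_liminf_deriv_right_le (fun s _ ↦ (hf s).continuousAt.continuousWithinAt)
    (fun s _ _ hr ↦ (hf s).hasDerivWithinAt.liminf_right_slope_le hr) ha
    (fun s hs ↦ bound s hs.1) t ⟨ht, le_rfl⟩

lemma gronwallBound_neg {k : ℝ} (hk : k ≠ 0) (δ ε x : ℝ) :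
    gronwallBound δ (-k) ε x = δ * exp (-k * x) + ε / k * (1 - exp (-k * x)) := by
  rw [gronwallBound_of_K_ne_0 (neg_ne_zero.2 hk), div_neg]
  ring

lemma min_le_of_deriv_ge {f f' : ℝ → ℝ} {k m : ℝ} (hk : 0 < k)
    (hf : ∀ s, HasDerivAt f (f' s) s) (bound : ∀ s ≥ 0, k * (m - f s) ≤ f' s)
    {t : ℝ} (ht : 0 ≤ t) : min (f 0) m ≤ f t := by
  have hneg := le_gronwallBound_of_hasDerivAt (f := fun s ↦ -f s) (K := -k) (ε := -(k * m))
    (fun s ↦ (hf s).neg) le_rfl (fun s hs ↦ by linarith [bound s hs]) ht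
  rw [sub_zero, gronwallBound_neg hk.ne', neg_div, mul_div_cancel_left₀ _ hk.ne'] at hneg
  have he : exp (-k * t) ≤ 1 := exp_le_one_iff.2 (by nlinarith)
  have h0 := exp_pos (-k * t)
  nlinarith [min_le_left (f 0) m, min_le_right (f 0) m]

lemma tendsto_zero_of_deriv_le_neg_mul_add {u u' g : ℝ → ℝ} {k : ℝ} (hk : 0 < k)
    (hu : ∀ s, HasDerivAt u (u' s) s) (bound : ∀ᶠ s in atTop, u' s ≤ -k * u s + g s)
    (hg : Tendsto g atTop (𝓝 0)) (hu₀ : ∀ᶠ s in atTop, 0 ≤ u s) :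
    Tendsto u atTop (𝓝 0) := by
  refine tendsto_order.2 ⟨fun e he ↦ hu₀.mono fun s hs ↦ he.trans_le hs, fun e he ↦ ?_⟩
  obtain ⟨s₀, hs₀⟩ := eventually_atTop.1
    (bound.and (hg.eventually (gt_mem_nhds (by positivity : 0 < k * (e / 2)))))
  have hdecay : Tendsto (fun t ↦ u s₀ * exp (-k * (t - s₀))) atTop (𝓝 0) := by
    simpa [sub_eq_add_neg] using (tendsto_exp_atBot.comp
      ((tendsto_atTop_add_const_right _ (-s₀) tendsto_id).const_mul_atTop_of_neg
        (neg_lt_zero.2 hk))).const_mul (u s₀)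
  filter_upwards [eventually_ge_atTop s₀, hdecay.eventually (gt_mem_nhds (half_pos he))]
    with t ht hsmall
  have hgr := le_gronwallBound_of_hasDerivAt (K := -k) (ε := k * (e / 2)) hu le_rfl
    (fun s hs ↦ (hs₀ s hs).1.trans (by linarith [(hs₀ s hs).2])) ht
  rw [gronwallBound_neg hk.ne', mul_div_cancel_left₀ _ hk.ne'] at hgr
  have := exp_pos (-k * (t - s₀))
  nlinarith

lemma tendsto_zero_of_deriv_le_neg_mul_sq {W W' : ℝ → ℝ} {c : ℝ} (hc : 0 < c)
    (hW : ∀ s, HasDerivAt W (W' s) s) (bound : ∀ s ≥ 0, W' s ≤ -c * W s ^ 2)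
    (hW₀ : ∀ s ≥ 0, 0 ≤ W s) : Tendsto W atTop (𝓝 0) := by
  have hanti : AntitoneOn W (Ici 0) :=
    antitoneOn_of_hasDerivWithinAt_nonpos (convex_Ici 0)
      (fun s _ ↦ (hW s).continuousAt.continuousWithinAt) (fun s _ ↦ (hW s).hasDerivWithinAt)
      (fun s hs ↦ by
        rw [interior_Ici] at hs
        nlinarith [bound s (le_of_lt hs), sq_nonneg (W s)])
  -- `W` is antitone, so on `[0, T]` it decays at rate at least `c * W T ^ 2`
  have hsq : ∀ T > 0, W T ^ 2 ≤ W 0 / c * T⁻¹ := by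
    intro T hT
    have := image_le_of_deriv_right_le_deriv_boundary (a := 0) (b := T)
      (fun s _ ↦ (hW s).continuousAt.continuousWithinAt) (fun s _ ↦ (hW s).hasDerivWithinAt)
      (B := fun s ↦ W 0 - c * W T ^ 2 * s) (by simp) (by fun_prop)
      (fun s _ ↦ ((hasDerivAt_id s).const_mul (c * W T ^ 2)).const_sub (W 0) |>.hasDerivWithinAt)
      (fun s hs ↦ ?_) ⟨hT.le, le_rfl⟩
    · rw [← div_eq_mul_inv, div_div, le_div_iff₀ (by positivity)]
      nlinarith [hW₀ T hT.le]
    · have hle : W T ^ 2 ≤ W s ^ 2 := pow_le_pow_left₀ (hW₀ T hT.le) (hanti hs.1 hT.le hs.2.le) 2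
      nlinarith [bound s hs.1]
  have hsq_tendsto : Tendsto (fun T ↦ W T ^ 2) atTop (𝓝 0) :=
    squeeze_zero' (.of_forall fun T ↦ sq_nonneg (W T))
      ((eventually_gt_atTop 0).mono hsq)
      (by simpa using tendsto_inv_atTop_zero.const_mul (W 0 / c))
  simpa using hsq_tendsto.sqrt.congr' <|
    (eventually_ge_atTop 0).mono fun T hT ↦ sqrt_sq (hW₀ T hT)

lemma sq_add_le_mul_add_sq {p q : ℝ} (hp : 0 < p) (hq : 0 < q) (a b y z : ℝ) :
    (a * y + b * z) ^ 2 ≤ (a ^ 2 / p + b ^ 2 / q) * (p * y ^ 2 + q * z ^ 2) := by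
  rw [div_add_div _ _ hp.ne' hq.ne', div_mul_eq_mul_div, le_div_iff₀ (by positivity)]
  nlinarith [sq_nonneg (a * q * z - b * p * y)]

namespace HostVector

variable {μh μv γ δ σ ε x₀ x y z : ℝ}

lemma deriv_weighted_infected_le (hδ : 0 < δ) (hσ : 0 < σ) (hR : σ * δ ≤ μv * (μh + γ))
    (hz : 0 ≤ z) (hxy : x + y ≤ 1) :
    σ * (δ * x * z - (μh + γ) * y) + (μh + γ) * (σ * (1 - z) * y - μv * z)
      ≤ -(σ * (δ + μh + γ)) * (y * z) := by
  nlinarith [mul_nonneg hz (sub_nonneg.2 hR),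
    mul_nonneg (mul_nonneg hσ.le hδ.le) (mul_nonneg hz (by linarith : 0 ≤ 1 - x - y))]

lemma deriv_lyapunov_le (hδ : 0 < δ) (hσ : 0 < σ) (hR : σ * δ ≤ μv * (μh + γ))
    (hε : 0 < ε) (hεc : ε * (μh + γ + μv + σ) ≤ σ * (δ + μh + γ))
    (hx₀ : 0 ≤ x₀) (hx : x₀ ≤ x) (hy : 0 ≤ y) (hz : 0 ≤ z) (hxy : x + y ≤ 1) :
    σ * (δ * x * z - (μh + γ) * y) + (μh + γ) * (σ * (1 - z) * y - μv * z)
      - ε * ((δ * x * z - (μh + γ) * y) * z + y * (σ * (1 - z) * y - μv * z))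
      ≤ -ε * (σ * y ^ 2 + δ * x₀ * z ^ 2) := by
  have hlin := deriv_weighted_infected_le hδ hσ hR hz hxy
  have hprod : (δ * x * z - (μh + γ) * y) * z + y * (σ * (1 - z) * y - μv * z)
      ≥ δ * x₀ * z ^ 2 - (μh + γ + μv) * (y * z) + σ * (1 - z) * y ^ 2 := by
    nlinarith [mul_le_mul_of_nonneg_left hx (mul_nonneg hδ.le (sq_nonneg z))]
  -- with `ε σ (1 - z) y²` from `hprod`, this turns the spare `ε σ y z` into `ε σ y²`
  have hyz : y ^ 2 * z ≤ y * z := by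
    nlinarith [mul_nonneg (mul_nonneg hy hz) (by linarith : 0 ≤ 1 - y)]
  nlinarith [mul_le_mul_of_nonneg_left hprod hε.le,
    mul_le_mul_of_nonneg_right hεc (mul_nonneg hy hz),
    mul_le_mul_of_nonneg_left hyz (mul_nonneg hε.le hσ.le)]

lemma lyapunov_ge (hσ : 0 < σ) (hε : ε ≤ σ / 2) (hy : 0 ≤ y) (hz : 0 ≤ z) (hz₁ : z ≤ 1) :
    σ / 2 * y + (μh + γ) * z ≤ σ * y + (μh + γ) * z - ε * (y * z) := by
  nlinarith [mul_le_mul_of_nonneg_right hε (mul_nonneg hy hz),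
    mul_le_mul_of_nonneg_left (mul_le_of_le_one_right hy hz₁) (by positivity : 0 ≤ σ / 2)]

lemma deriv_lyapunov_le_neg_sq (hμh : 0 < μh) (hγ : 0 < γ) (hδ : 0 < δ) (hσ : 0 < σ)
    (hR : σ * δ ≤ μv * (μh + γ)) (hε : 0 < ε) (hεσ : ε ≤ σ / 2)
    (hεc : ε * (μh + γ + μv + σ) ≤ σ * (δ + μh + γ)) (hx₀ : 0 < x₀)
    (hx : x₀ ≤ x) (hy : 0 ≤ y) (hz : 0 ≤ z) (hz₁ : z ≤ 1) (hxy : x + y ≤ 1) :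
    σ * (δ * x * z - (μh + γ) * y) + (μh + γ) * (σ * (1 - z) * y - μv * z)
      - ε * ((δ * x * z - (μh + γ) * y) * z + y * (σ * (1 - z) * y - μv * z))
      ≤ -(ε / (σ + (μh + γ) ^ 2 / (δ * x₀)))
        * (σ * y + (μh + γ) * z - ε * (y * z)) ^ 2 := by
  set W := σ * y + (μh + γ) * z - ε * (y * z)
  have hW₀ : 0 ≤ W := le_trans (by positivity) (lyapunov_ge hσ hεσ hy hz hz₁)
  have hW : W ^ 2 ≤ (σ + (μh + γ) ^ 2 / (δ * x₀)) * (σ * y ^ 2 + δ * x₀ * z ^ 2) := by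
    calc W ^ 2 ≤ (σ * y + (μh + γ) * z) ^ 2 :=
          pow_le_pow_left₀ hW₀ (by nlinarith [mul_nonneg hε.le (mul_nonneg hy hz)]) 2
      _ ≤ (σ ^ 2 / σ + (μh + γ) ^ 2 / (δ * x₀)) * (σ * y ^ 2 + δ * x₀ * z ^ 2) :=
          sq_add_le_mul_add_sq hσ (by positivity) _ _ _ _
      _ = _ := by rw [sq, mul_self_div_self]
  calc _ ≤ -ε * (σ * y ^ 2 + δ * x₀ * z ^ 2) :=
        deriv_lyapunov_le hδ hσ hR hε hεc hx₀.le hx hy hz hxy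
    _ ≤ _ := by
      rw [neg_mul, neg_mul, neg_le_neg_iff, div_mul_eq_mul_div, div_le_iff₀ (by positivity),
        mul_assoc, mul_comm (σ * y ^ 2 + δ * x₀ * z ^ 2)]
      exact mul_le_mul_of_nonneg_left hW hε.le

structure IsTrajectory (μh μv γ δ σ : ℝ) (X Y Z : ℝ → ℝ) : Prop where
  hasDerivAt_X : ∀ t, HasDerivAt X (μh * (1 - X t) - δ * X t * Z t) t
  hasDerivAt_Y : ∀ t, HasDerivAt Y (δ * X t * Z t - (μh + γ) * Y t) t
  hasDerivAt_Z : ∀ t, HasDerivAt Z (σ * (1 - Z t) * Y t - μv * Z t) t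
  mem_region : ∀ t, 0 ≤ t → 0 < X t ∧ 0 ≤ Y t ∧ 0 ≤ Z t ∧ X t + Y t ≤ 1 ∧ Z t ≤ 1

namespace IsTrajectory

variable {X Y Z : ℝ → ℝ}

lemma min_le_X (h : IsTrajectory μh μv γ δ σ X Y Z) (hμh : 0 < μh) (hδ : 0 < δ) {t : ℝ}
    (ht : 0 ≤ t) : min (X 0) (μh / (μh + δ)) ≤ X t :=
  min_le_of_deriv_ge (k := μh + δ) (by positivity) h.hasDerivAt_X (fun s hs ↦ by
    obtain ⟨hXs, -, -, -, hZ₁⟩ := h.mem_region s hs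
    rw [mul_sub, mul_div_cancel₀ _ (by positivity)]
    nlinarith [mul_le_mul_of_nonneg_left hZ₁ (mul_nonneg hδ.le hXs.le)]) ht

lemma tendsto_lyapunov (h : IsTrajectory μh μv γ δ σ X Y Z) (hμh : 0 < μh) (hγ : 0 < γ)
    (hδ : 0 < δ) (hσ : 0 < σ) (hR : σ * δ ≤ μv * (μh + γ)) (hε : 0 < ε) (hεσ : ε ≤ σ / 2)
    (hεc : ε * (μh + γ + μv + σ) ≤ σ * (δ + μh + γ)) (hx₀ : 0 < x₀)
    (hX : ∀ t ≥ 0, x₀ ≤ X t) :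
    Tendsto (fun t ↦ σ * Y t + (μh + γ) * Z t - ε * (Y t * Z t)) atTop (𝓝 0) :=
  tendsto_zero_of_deriv_le_neg_mul_sq (c := ε / (σ + (μh + γ) ^ 2 / (δ * x₀))) (by positivity)
    (fun t ↦ (((h.hasDerivAt_Y t).const_mul σ).add ((h.hasDerivAt_Z t).const_mul (μh + γ))).sub
      (((h.hasDerivAt_Y t).mul (h.hasDerivAt_Z t)).const_mul ε))
    (fun t ht ↦ by
      obtain ⟨-, hY, hZ, hXY, hZ₁⟩ := h.mem_region t ht
      exact deriv_lyapunov_le_neg_sq hμh hγ hδ hσ hR hε hεσ hεc hx₀ (hX t ht) hY hZ hZ₁ hXY)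
    (fun t ht ↦ by
      obtain ⟨-, hY, hZ, -, hZ₁⟩ := h.mem_region t ht
      exact le_trans (by positivity) (lyapunov_ge hσ hεσ hY hZ hZ₁))

lemma tendsto_infected (h : IsTrajectory μh μv γ δ σ X Y Z) (hμh : 0 < μh) (hμv : 0 < μv)
    (hγ : 0 < γ) (hδ : 0 < δ) (hσ : 0 < σ) (hR : σ * δ ≤ μv * (μh + γ)) (hX₀ : 0 < X 0) :
    Tendsto Y atTop (𝓝 0) ∧ Tendsto Z atTop (𝓝 0) := by
  set ε := min (σ / 2) (σ * (δ + μh + γ) / (μh + γ + μv + σ))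
  have hεσ : ε ≤ σ / 2 := min_le_left _ _
  have hW := h.tendsto_lyapunov hμh hγ hδ hσ hR (lt_min (by positivity) (by positivity)) hεσ
    ((le_div_iff₀ (by positivity)).1 (min_le_right _ _)) (lt_min hX₀ (by positivity))
    (fun t ht ↦ h.min_le_X hμh hδ ht)
  have hW_ge : ∀ t ≥ 0, σ / 2 * Y t + (μh + γ) * Z t
      ≤ σ * Y t + (μh + γ) * Z t - ε * (Y t * Z t) := fun t ht ↦
    lyapunov_ge hσ hεσ (h.mem_region t ht).2.1 (h.mem_region t ht).2.2.1
      (h.mem_region t ht).2.2.2.2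
  constructor
  · refine squeeze_zero' (eventually_atTop.2 ⟨0, fun t ht ↦ (h.mem_region t ht).2.1⟩)
      (eventually_atTop.2 ⟨0, fun t ht ↦ ?_⟩) (by simpa using hW.const_mul (2 / σ))
    rw [div_mul_eq_mul_div, le_div_iff₀ hσ]
    nlinarith [hW_ge t ht, mul_nonneg (by positivity : 0 ≤ μh + γ) (h.mem_region t ht).2.2.1]
  · refine squeeze_zero' (eventually_atTop.2 ⟨0, fun t ht ↦ (h.mem_region t ht).2.2.1⟩)
      (eventually_atTop.2 ⟨0, fun t ht ↦ ?_⟩) (by simpa using hW.div_const (μh + γ))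
    rw [le_div_iff₀ (by positivity)]
    nlinarith [hW_ge t ht, mul_nonneg hσ.le (h.mem_region t ht).2.1]

lemma tendsto_susceptible (h : IsTrajectory μh μv γ δ σ X Y Z) (hμh : 0 < μh) (hδ : 0 < δ)
    (hZ : Tendsto Z atTop (𝓝 0)) : Tendsto X atTop (𝓝 1) := by
  have hX₁ : Tendsto (fun t ↦ 1 - X t) atTop (𝓝 0) :=
    tendsto_zero_of_deriv_le_neg_mul_add (g := fun t ↦ δ * Z t) hμh
      (fun t ↦ (h.hasDerivAt_X t).const_sub 1)
      (eventually_atTop.2 ⟨0, fun t ht ↦ by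
        obtain ⟨-, hYt, hZt, hXYt, -⟩ := h.mem_region t ht
        nlinarith [mul_le_mul_of_nonneg_left (by linarith : X t ≤ 1) (mul_nonneg hδ.le hZt)]⟩)
      (by simpa using hZ.const_mul δ)
      (eventually_atTop.2 ⟨0, fun t ht ↦ by
        linarith [(h.mem_region t ht).2.1, (h.mem_region t ht).2.2.2.1]⟩)
  simpa using (tendsto_const_nhds (x := (1 : ℝ))).sub hX₁

end IsTrajectory

end HostVector

theorem disease_free_global_stability
    (μh μv γ δ σ : ℝ) (hμh : 0 < μh) (hμv : 0 < μv) (hγ : 0 < γ)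
    (hδ : 0 < δ) (hσ : 0 < σ)
    (R₀ : ℝ) (hR₀ : R₀ = σ * δ / (μv * (μh + γ))) (hR₀le : R₀ ≤ 1)
    (X Y Z : ℝ → ℝ)
    (hX : ∀ t, HasDerivAt X (μh * (1 - X t) - δ * X t * Z t) t)
    (hY : ∀ t, HasDerivAt Y (δ * X t * Z t - (μh + γ) * Y t) t)
    (hZ : ∀ t, HasDerivAt Z (σ * (1 - Z t) * Y t - μv * Z t) t)
    (hinv : ∀ t, 0 ≤ t → 0 < X t ∧ 0 ≤ Y t ∧ 0 ≤ Z t ∧ X t + Y t ≤ 1 ∧ Z t ≤ 1)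
    (h0 : 0 < X 0 ∧ 0 ≤ Y 0 ∧ 0 ≤ Z 0) :
    Filter.Tendsto (fun t => (X t, Y t, Z t)) Filter.atTop (nhds (1, 0, 0)) := by
  have hR : σ * δ ≤ μv * (μh + γ) := by
    rwa [hR₀, div_le_one (by positivity)] at hR₀le
  have h : HostVector.IsTrajectory μh μv γ δ σ X Y Z := ⟨hX, hY, hZ, hinv⟩
  obtain ⟨hY₀, hZ₀⟩ := h.tendsto_infected hμh hμv hγ hδ hσ hR h0.1
  exact (h.tendsto_susceptible hμh hδ hZ₀).prodMk_nhds (hY₀.prodMk_nhds hZ₀)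
end

section
/- Assume R₀ > 1 and let (X*,Y*,Z*) be the endemic equilibrium. For the function V(X,Y,Z) = X − X* log(X/X*) + Y − Y* log(Y/Y*) + (δX*/μ_v)(Z − Z* log(Z/Z*)), its derivative along the vector field X' = μ_h(1−X) − δXZ, Y' = δXZ − (μ_h+γ)Y, Z' = σ(1−Z)Y − μ_v Z equals μ_h[3 − X* − X − X*/X] + (σδX*/μ_v) Y [2Z* − Z − Z*/Z] − δ X Z Y*/Y + (μ_h+γ)(R₀X*(1−Z*)−1)Y, where the last term vanishes because R₀(1−Z*) = 1/X*. -/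
/-!
Given the equilibrium equations `μh (1 - X*) = δ X* Z* = (μh + γ) Y*` of the `X` and `Y`
components and `σ δ = μv (μh + γ) R₀`, both sides are the same rational function of `X, Y, Z`.
The remainder term vanishes by the equilibrium equation of the `Z` component,
`R₀ (1 - Z*) X* = 1`, which is read off from the closed form of `X*`.
-/

theorem lyapunov_derivative_eq_of_equilibrium {μh μv γ δ σ R₀ Xs Ys Zs X Y Z : ℝ}
    (hμv : μv ≠ 0) (hX : X ≠ 0) (hY : Y ≠ 0) (hZ : Z ≠ 0)
    (hR₀ : σ * δ = μv * (μh + γ) * R₀)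
    (hXeq : μh * (1 - Xs) = δ * Xs * Zs) (hYeq : δ * Xs * Zs = (μh + γ) * Ys) :
    (1 - Xs / X) * (μh * (1 - X) - δ * X * Z)
      + (1 - Ys / Y) * (δ * X * Z - (μh + γ) * Y)
      + (δ * Xs / μv) * (1 - Zs / Z) * (σ * (1 - Z) * Y - μv * Z)
    = μh * (3 - Xs - X - Xs / X)
      + (σ * δ * Xs / μv) * Y * (2 * Zs - Z - Zs / Z)
      - δ * X * Z * Ys / Y
      + (μh + γ) * (R₀ * Xs * (1 - Zs) - 1) * Y := by
  field_simp
  linear_combination -(μv * X * Y * Z) * (2 * hXeq + hYeq) + X * Y ^ 2 * Z * Xs * (1 - Zs) * hR₀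

theorem mul_one_sub_eq_inv_of_eq_div {R₀ D₀ Xs Zs : ℝ} (hR₀ : R₀ ≠ 0) (hD₀ : 1 + D₀ ≠ 0)
    (hXs₀ : Xs ≠ 0) (hXs : Xs = (1 + R₀ * D₀) / (R₀ * (1 + D₀))) (hZs : Zs = D₀ * (1 - Xs) / Xs) :
    R₀ * (1 - Zs) = 1 / Xs := by
  rw [hZs]
  field_simp at hXs ⊢
  linear_combination hXs

theorem lyapunov_derivative_endemic_identity_general
    (μh μv γ δ σ : ℝ) (hμh : 0 < μh) (hμv : 0 < μv) (hγ : 0 < γ)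
    (hδ : 0 < δ) (hσ : 0 < σ)
    (R₀ D₀ Xs Ys Zs : ℝ)
    (hR₀ : R₀ = σ * δ / (μv * (μh + γ)))
    (hD₀ : D₀ = μh / δ)
    (hXs : Xs = (1 + R₀ * D₀) / (R₀ * (1 + D₀)))
    (hYs : Ys = μh / (μh + γ) * (1 - Xs))
    (hZs : Zs = D₀ * (1 - Xs) / Xs)
    (X Y Z : ℝ) (hX : 0 < X) (hY : 0 < Y) (hZ : 0 < Z) :
    (1 - Xs / X) * (μh * (1 - X) - δ * X * Z)
      + (1 - Ys / Y) * (δ * X * Z - (μh + γ) * Y)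
      + (δ * Xs / μv) * (1 - Zs / Z) * (σ * (1 - Z) * Y - μv * Z)
    = μh * (3 - Xs - X - Xs / X)
      + (σ * δ * Xs / μv) * Y * (2 * Zs - Z - Zs / Z)
      - δ * X * Z * Ys / Y
      + (μh + γ) * (R₀ * Xs * (1 - Zs) - 1) * Y
    ∧ R₀ * (1 - Zs) = 1 / Xs := by
  have hR₀pos : 0 < R₀ := hR₀ ▸ by positivity
  have hD₀pos : 0 < D₀ := hD₀ ▸ by positivity
  have hXspos : 0 < Xs := hXs ▸ by positivity
  have hXeq : μh * (1 - Xs) = δ * Xs * Zs := by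
    rw [hZs, hD₀]
    field_simp
  have hYeq : δ * Xs * Zs = (μh + γ) * Ys := by
    rw [← hXeq, hYs]
    field_simp
  refine ⟨lyapunov_derivative_eq_of_equilibrium hμv.ne' hX.ne' hY.ne' hZ.ne' ?_ hXeq hYeq,
    mul_one_sub_eq_inv_of_eq_div hR₀pos.ne' (by positivity) hXspos.ne' hXs hZs⟩
  rw [hR₀]
  field_simp

theorem lyapunov_derivative_endemic_identity
    (μh μv γ δ σ : ℝ) (hμh : 0 < μh) (hμv : 0 < μv) (hγ : 0 < γ)
    (hδ : 0 < δ) (hσ : 0 < σ)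
    (R₀ D₀ Xs Ys Zs : ℝ)
    (hR₀ : R₀ = σ * δ / (μv * (μh + γ))) (hR₀gt : 1 < R₀)
    (hD₀ : D₀ = μh / δ)
    (hXs : Xs = (1 + R₀ * D₀) / (R₀ * (1 + D₀)))
    (hYs : Ys = μh / (μh + γ) * (1 - Xs))
    (hZs : Zs = D₀ * (1 - Xs) / Xs)
    (X Y Z : ℝ) (hX : 0 < X) (hY : 0 < Y) (hZ : 0 < Z) :
    (1 - Xs / X) * (μh * (1 - X) - δ * X * Z)
      + (1 - Ys / Y) * (δ * X * Z - (μh + γ) * Y)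
      + (δ * Xs / μv) * (1 - Zs / Z) * (σ * (1 - Z) * Y - μv * Z)
    = μh * (3 - Xs - X - Xs / X)
      + (σ * δ * Xs / μv) * Y * (2 * Zs - Z - Zs / Z)
      - δ * X * Z * Ys / Y
      + (μh + γ) * (R₀ * Xs * (1 - Zs) - 1) * Y
    ∧ R₀ * (1 - Zs) = 1 / Xs :=
  lyapunov_derivative_endemic_identity_general μh μv γ δ σ hμh hμv hγ hδ hσ R₀ D₀ Xs Ys Zs hR₀ hD₀
    hXs hYs hZs X Y Z hX hY hZ
end

section
/- If R₀ > 1, then the derivative of the Lyapunov function V(X,Y,Z) = X − X* log(X/X*) + Y − Y* log(Y/Y*) + (δX*/μ_v)(Z − Z* log(Z/Z*)) along the flow of X' = μ_h(1−X) − δXZ, Y' = δXZ − (μ_h+γ)Y, Z' = σ(1−Z)Y − μ_v Z is strictly negative at every point of the open positive octant except at the endemic equilibrium (X*,Y*,Z*), where it is zero. -/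
lemma amgm3 {p q r : ℝ} (hp : 0 < p) (hq : 0 < q) (hr : 0 < r) (h : p * q * r = 1) :
    3 ≤ p + q + r := by
  have h3 : (1:ℝ)/3 + 1/3 + 1/3 = 1 := by norm_num
  have := Real.geom_mean_le_arith_mean3_weighted (by norm_num : (0:ℝ) ≤ 1/3)
    (by norm_num : (0:ℝ) ≤ 1/3) (by norm_num : (0:ℝ) ≤ 1/3) hp.le hq.le hr.le h3
  have hg : p ^ ((1:ℝ)/3) * q ^ ((1:ℝ)/3) * r ^ ((1:ℝ)/3) = 1 := by
    rw [← Real.mul_rpow hp.le hq.le, ← Real.mul_rpow (by positivity) hr.le, h, Real.one_rpow]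
  rw [hg] at this
  linarith

lemma key_identity (μh μv γ δ σ X Y Z Xs Ys Zs : ℝ)
    (hmv : μv ≠ 0) (hX : X ≠ 0) (hY : Y ≠ 0) (hZ : Z ≠ 0)
    (hXs0 : Xs ≠ 0) (hYs0 : Ys ≠ 0) (hZs0 : Zs ≠ 0)
    (E1 : μh * (1 - Xs) = δ * Xs * Zs)
    (E2 : (μh + γ) * Ys = δ * Xs * Zs)
    (E3 : σ * (1 - Zs) * Ys = μv * Zs) :
    (1 - Xs / X) * (μh * (1 - X) - δ * X * Z)
      + (1 - Ys / Y) * (δ * X * Z - (μh + γ) * Y)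
      + (δ * Xs / μv) * (1 - Zs / Z) * (σ * (1 - Z) * Y - μv * Z)
    = -(μh * (X - Xs)^2 / X) - (δ * Xs * σ / μv) * Y * (Z - Zs)^2 / Z
      - δ * Xs * Zs * (Xs / X + X * Z * Ys / (Xs * Zs * Y) + Y * Zs / (Ys * Z) - 3) := by
  have h : (1 - Xs / X) * (μh * (1 - X) - δ * X * Z)
      + (1 - Ys / Y) * (δ * X * Z - (μh + γ) * Y)
      + (δ * Xs / μv) * (1 - Zs / Z) * (σ * (1 - Z) * Y - μv * Z)
    - (-(μh * (X - Xs)^2 / X) - (δ * Xs * σ / μv) * Y * (Z - Zs)^2 / Z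
      - δ * Xs * Zs * (Xs / X + X * Z * Ys / (Xs * Zs * Y) + Y * Zs / (Ys * Z) - 3))
    = (1 - Xs/X) * (μh * (1 - Xs) - δ * Xs * Zs)
      + (1 - Y/Ys) * ((μh + γ) * Ys - δ * Xs * Zs)
      + (δ*Xs*Y*(Z-Zs)/(μv*Ys*Z)) * (σ * (1 - Zs) * Ys - μv * Zs) := by
    field_simp
    ring
  have h2 : (1 - Xs/X) * (μh * (1 - Xs) - δ * Xs * Zs)
      + (1 - Y/Ys) * ((μh + γ) * Ys - δ * Xs * Zs)
      + (δ*Xs*Y*(Z-Zs)/(μv*Ys*Z)) * (σ * (1 - Zs) * Ys - μv * Zs) = 0 := by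
    rw [E1, E2, E3]; ring
  linarith [h, h2]

theorem lyapunov_strict_endemic
    (μh μv γ δ σ : ℝ) (hμh : 0 < μh) (hμv : 0 < μv) (hγ : 0 < γ)
    (hδ : 0 < δ) (hσ : 0 < σ)
    (R₀ D₀ Xs Ys Zs : ℝ)
    (hR₀ : R₀ = σ * δ / (μv * (μh + γ))) (hR₀gt : 1 < R₀)
    (hD₀ : D₀ = μh / δ)
    (hXs : Xs = (1 + R₀ * D₀) / (R₀ * (1 + D₀)))
    (hYs : Ys = μh / (μh + γ) * (1 - Xs))
    (hZs : Zs = D₀ * (1 - Xs) / Xs) :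
    ∀ X Y Z : ℝ, 0 < X → 0 < Y → 0 < Z →
      ((X, Y, Z) ≠ (Xs, Ys, Zs) →
        (1 - Xs / X) * (μh * (1 - X) - δ * X * Z)
          + (1 - Ys / Y) * (δ * X * Z - (μh + γ) * Y)
          + (δ * Xs / μv) * (1 - Zs / Z) * (σ * (1 - Z) * Y - μv * Z) < 0)
      ∧ ((X, Y, Z) = (Xs, Ys, Zs) →
        (1 - Xs / X) * (μh * (1 - X) - δ * X * Z)
          + (1 - Ys / Y) * (δ * X * Z - (μh + γ) * Y)
          + (δ * Xs / μv) * (1 - Zs / Z) * (σ * (1 - Z) * Y - μv * Z) = 0) := by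
  have hc : 0 < μh + γ := by linarith
  have he : 0 < σ * δ - μv * (μh + γ) := by
    rw [hR₀] at hR₀gt
    have h1 := (one_lt_div (by positivity : (0:ℝ) < μv * (μh + γ))).mp hR₀gt
    linarith
  have hμh' : μh ≠ 0 := hμh.ne'
  have hμv' : μv ≠ 0 := hμv.ne'
  have hδ' : δ ≠ 0 := hδ.ne'
  have hσ' : σ ≠ 0 := hσ.ne'
  have hc' : μh + γ ≠ 0 := hc.ne'
  have hδμ : δ + μh ≠ 0 := by positivity
  have hnum : μv * (μh + γ) + σ * μh ≠ 0 := by positivity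
  have he' : σ * δ - μv * (μh + γ) ≠ 0 := he.ne'
  have hXs2 : Xs = (μv * (μh + γ) + σ * μh) / (σ * (δ + μh)) := by
    rw [hXs, hR₀, hD₀]
    field_simp
    all_goals try ring
    all_goals tauto
  have hXsp : 0 < Xs := by rw [hXs2]; positivity
  have hYs2 : Ys = μh * (σ * δ - μv * (μh + γ)) / ((μh + γ) * (σ * (δ + μh))) := by
    rw [hYs, hXs2]
    field_simp
    all_goals try ring
    all_goals tauto
  have hYsp : 0 < Ys := by
    rw [hYs2]
    exact div_pos (by positivity) (by positivity)
  have hZs2 : Zs = μh * (σ * δ - μv * (μh + γ)) / (δ * (μv * (μh + γ) + σ * μh)) := by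
    rw [hZs, hD₀, hXs2]
    field_simp
    all_goals try ring
    all_goals tauto
  have hZsp : 0 < Zs := by
    rw [hZs2]
    exact div_pos (by positivity) (by positivity)
  have E1 : μh * (1 - Xs) = δ * Xs * Zs := by
    rw [hXs2, hZs2]; field_simp <;> (try ring) <;> tauto
  have E2 : (μh + γ) * Ys = δ * Xs * Zs := by
    rw [hXs2, hYs2, hZs2]; field_simp <;> (try ring) <;> tauto
  have E3 : σ * (1 - Zs) * Ys = μv * Zs := by
    rw [hYs2, hZs2]; field_simp <;> (try ring) <;> tauto
  intro X Y Z hX hY hZ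
  have hkey := key_identity μh μv γ δ σ X Y Z Xs Ys Zs hμv.ne' hX.ne' hY.ne' hZ.ne'
    hXsp.ne' hYsp.ne' hZsp.ne' E1 E2 E3
  have hprod : (Xs / X) * (X * Z * Ys / (Xs * Zs * Y)) * (Y * Zs / (Ys * Z)) = 1 := by
    field_simp
    all_goals try ring
    all_goals tauto
  have hamgm := amgm3 (by positivity) (by positivity) (by positivity) hprod
  have hC : 0 ≤ δ * Xs * Zs * (Xs / X + X * Z * Ys / (Xs * Zs * Y) + Y * Zs / (Ys * Z) - 3) := by
    apply mul_nonneg (by positivity)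
    linarith
  have hA : 0 ≤ μh * (X - Xs)^2 / X := by positivity
  have hB : 0 ≤ (δ * Xs * σ / μv) * Y * (Z - Zs)^2 / Z := by positivity
  constructor
  · intro hne
    rw [hkey]
    by_cases hx : X = Xs
    · by_cases hz : Z = Zs
      · have hy : Y ≠ Ys := fun hy => hne (by rw [hx, hy, hz])
        have hsq : 0 < (Y - Ys)^2 := by
          have h0 := sub_ne_zero.mpr hy
          positivity
        rw [hx, hz]
        have hsum : Xs / Xs + Xs * Zs * Ys / (Xs * Zs * Y) + Y * Zs / (Ys * Zs) - 3
            = (Y - Ys)^2 / (Y * Ys) := by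
          field_simp
          ring
        rw [hsum]
        have hCpos : 0 < δ * Xs * Zs * ((Y - Ys)^2 / (Y * Ys)) :=
          mul_pos (by positivity) (div_pos hsq (by positivity))
        have e1 : μh * (Xs - Xs)^2 / Xs = 0 := by simp
        have e2 : (δ * Xs * σ / μv) * Y * (Zs - Zs)^2 / Zs = 0 := by simp
        linarith [hCpos, e1, e2]
      · have h0 := sub_ne_zero.mpr hz
        have hBpos : 0 < (δ * Xs * σ / μv) * Y * (Z - Zs)^2 / Z := by positivity
        linarith [hA, hC, hBpos]
    · have h0 := sub_ne_zero.mpr hx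
      have hApos : 0 < μh * (X - Xs)^2 / X := by positivity
      linarith [hApos, hB, hC]
  · intro heq
    obtain ⟨h1, h2, h3⟩ : X = Xs ∧ Y = Ys ∧ Z = Zs := by
      simpa [Prod.ext_iff] using heq
    rw [hkey, h1, h2, h3]
    have e1 : μh * (Xs - Xs)^2 / Xs = 0 := by simp
    have e2 : (δ * Xs * σ / μv) * Ys * (Zs - Zs)^2 / Zs = 0 := by simp
    have e3 : Xs / Xs + Xs * Zs * Ys / (Xs * Zs * Ys) + Ys * Zs / (Ys * Zs) - 3 = 0 := by
      field_simp
      try norm_num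
    rw [e3]
    linarith [e1, e2]
end

section
/- The point (X*, Y*) with X* = ((μ_h+γ)μ_v + μ_h σ)/((μ_h+δ)σ) and Y* = (δμ_hσ − (μ_h² + γμ_h)μ_v)/((μ_h² + (γ+δ)μ_h + δγ)σ) is an equilibrium of the planar system X' = μ_h(1−X) − δσXY/(σY+μ_v), Y' = δσXY/(σY+μ_v) − (μ_h+γ)Y, and if R₀ = δσ/(μ_v(μ_h+γ)) > 1 then X* ∈ (0,1) and Y* > 0. -/
theorem planar_endemic_equilibrium
    (μh μv γ δ σ : ℝ) (hμh : 0 < μh) (hμv : 0 < μv) (hγ : 0 < γ)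
    (hδ : 0 < δ) (hσ : 0 < σ)
    (Xs Ys : ℝ)
    (hXs : Xs = ((μh + γ) * μv + μh * σ) / ((μh + δ) * σ))
    (hYs : Ys = (δ * μh * σ - (μh ^ 2 + γ * μh) * μv) /
      ((μh ^ 2 + (γ + δ) * μh + δ * γ) * σ)) :
    (μh * (1 - Xs) - δ * σ * Xs * Ys / (σ * Ys + μv) = 0 ∧
     δ * σ * Xs * Ys / (σ * Ys + μv) - (μh + γ) * Ys = 0) ∧
    (1 < δ * σ / (μv * (μh + γ)) → 0 < Xs ∧ Xs < 1 ∧ 0 < Ys) := by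
  have hd1 : (0:ℝ) < (μh + δ) * σ := by positivity
  have hd2 : (0:ℝ) < (μh ^ 2 + (γ + δ) * μh + δ * γ) * σ := by positivity
  have hfac : μh ^ 2 + (γ + δ) * μh + δ * γ = (μh + γ) * (μh + δ) := by ring
  have hS : σ * Ys + μv = δ * (μh * σ + μv * (μh + γ)) / ((μh + γ) * (μh + δ)) := by
    subst hYs
    rw [hfac]
    field_simp
    ring
  have hSpos : 0 < σ * Ys + μv := by
    rw [hS]; positivity
  constructor
  · constructor
    · rw [hS]
      subst hXs hYs
      rw [hfac]
      field_simp
      ring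
    · rw [hS]
      subst hXs hYs
      rw [hfac]
      field_simp
      ring
  · intro hR
    have hR' : μv * (μh + γ) < δ * σ := by
      have h := (lt_div_iff₀ (by positivity : (0:ℝ) < μv * (μh + γ))).mp hR
      linarith
    refine ⟨?_, ?_, ?_⟩
    · rw [hXs]; positivity
    · rw [hXs, div_lt_one hd1]
      nlinarith
    · rw [hYs]
      apply div_pos _ hd2
      nlinarith
end
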